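/- For every natural number k and every integer n, the polynomial h_k(n) has degree at most k in u, the coefficient of u^k in h_k(n) equals n^k, and h_k(n)(−u) = (−1)^k · h_k(n)(u) as polynomials in u. -/
import Mathlib


open Polynomial

/-- The polynomials `h_k(n)` with `h_0(n) = 1` and
`h_{k+1}(n)(u) = (n - k)·u·h_k(n)(u) + (u² + 1)·d/du[h_k(n)(u)]`. -/
noncomputable def hPoly (n : ℤ) : ℕ → Polynomial ℂ
  | 0 => 1
  | k + 1 =>
      Polynomial.C ((n : ℂ) - (k : ℂ)) * Polynomial.X * hPoly n k +
        (Polynomial.X ^ 2 + 1) * Polynomial.derivative (hPoly n k)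

theorem hPoly_degree_coeff_parity (k : ℕ) (n : ℤ) :
    (hPoly n k).degree ≤ (k : ℕ) ∧ (hPoly n k).coeff k = (n : ℂ) ^ k ∧
      (hPoly n k).comp (-Polynomial.X) = (-1 : Polynomial ℂ) ^ k * hPoly n k := by
  induction k with
  | zero => simp [hPoly]
  | succ k ih =>
    obtain ⟨hdeg, hcoeff, hpar⟩ := ih
    set h := hPoly n k with hh
    -- degree bound
    have hdeg1 : (Polynomial.C ((n : ℂ) - (k : ℂ)) * Polynomial.X * h).degree
        ≤ ((k + 1 : ℕ) : WithBot ℕ) := by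
      calc (Polynomial.C ((n : ℂ) - (k : ℂ)) * Polynomial.X * h).degree
          ≤ (Polynomial.C ((n : ℂ) - (k : ℂ)) * Polynomial.X).degree + h.degree :=
            degree_mul_le _ _
        _ ≤ 1 + (k : WithBot ℕ) := by
            refine add_le_add ?_ hdeg
            refine (degree_mul_le _ _).trans ?_
            refine le_trans (add_le_add (degree_C_le) (le_of_eq degree_X)) ?_
            simp
        _ = ((k + 1 : ℕ) : WithBot ℕ) := by
            push_cast; rw [add_comm]
    have hdeg2 : ((Polynomial.X ^ 2 + 1) * derivative h).degree
        ≤ ((k + 1 : ℕ) : WithBot ℕ) := by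
      by_cases hz : derivative h = 0
      · simp [hz]
      have hlt : (derivative h).degree < (k : WithBot ℕ) :=
        lt_of_lt_of_le (degree_derivative_lt (fun h0 => hz (by rw [h0]; simp))) hdeg
      have hdd : (derivative h).degree = ((derivative h).natDegree : WithBot ℕ) :=
        degree_eq_natDegree hz
      rw [hdd] at hlt
      have hnat : (derivative h).natDegree < k := by exact_mod_cast hlt
      calc ((Polynomial.X ^ 2 + 1) * derivative h).degree
          ≤ (Polynomial.X ^ 2 + 1 : ℂ[X]).degree + (derivative h).degree :=
            degree_mul_le _ _
        _ ≤ 2 + ((derivative h).natDegree : WithBot ℕ) := by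
            rw [hdd]
            refine add_le_add ?_ le_rfl
            have : (Polynomial.X ^ 2 + 1 : ℂ[X]) = Polynomial.X ^ 2 + Polynomial.C 1 := by simp
            rw [this, degree_X_pow_add_C (by norm_num)]
            norm_cast
        _ = (((derivative h).natDegree + 2 : ℕ) : WithBot ℕ) := by push_cast; rw [add_comm]
        _ ≤ ((k + 1 : ℕ) : WithBot ℕ) := by exact_mod_cast Nat.succ_le_of_lt (by omega)
    have Hdeg : (hPoly n (k + 1)).degree ≤ ((k + 1 : ℕ) : WithBot ℕ) := by
      rw [hPoly]
      exact le_trans (degree_add_le _ _) (max_le hdeg1 hdeg2)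
    refine ⟨Hdeg, ?_, ?_⟩
    -- coefficient
    · have hc2 : ((Polynomial.X ^ 2 + 1) * derivative h).coeff (k + 1)
          = (derivative h).coeff (k + 1 - 2) * (if 2 ≤ k + 1 then 1 else 0)
            + (derivative h).coeff (k + 1) := by
        rw [add_mul, one_mul, coeff_add, (commute_X_pow (derivative h) 2).eq,
          coeff_mul_X_pow']
        split <;> simp
      have hder_top : (derivative h).coeff (k + 1) = 0 := by
        apply coeff_eq_zero_of_degree_lt
        refine lt_of_le_of_lt (le_trans (degree_derivative_le) hdeg) ?_
        exact_mod_cast Nat.lt_succ_self k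
      have hc1 : (Polynomial.C ((n : ℂ) - (k : ℂ)) * Polynomial.X * h).coeff (k + 1)
          = ((n : ℂ) - (k : ℂ)) * (n : ℂ) ^ k := by
        rw [mul_assoc, coeff_C_mul, coeff_X_mul, hcoeff]
      rw [hPoly, coeff_add, hc1, hc2, hder_top]
      rcases k with _ | j
      · norm_num
      · have h2 : (2 : ℕ) ≤ j + 1 + 1 := by omega
        rw [if_pos h2]
        have : j + 1 + 1 - 2 = j := by omega
        rw [this, coeff_derivative, hcoeff]
        push_cast
        ring
    -- parity
    · have hdercomp : (derivative h).comp (-Polynomial.X)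
          = -((-1 : ℂ[X]) ^ k * derivative h) := by
        have hdc := derivative_comp h (-Polynomial.X)
        rw [hpar] at hdc
        have h0 : derivative ((-1 : ℂ[X]) ^ k) = 0 := by
          simp [derivative_pow]
        have : derivative ((-1 : ℂ[X]) ^ k * h) = (-1 : ℂ[X]) ^ k * derivative h := by
          rw [derivative_mul, h0, zero_mul, zero_add]
        rw [this] at hdc
        have h1 : derivative (-Polynomial.X : ℂ[X]) = -1 := by simp
        rw [h1] at hdc
        linear_combination hdc
      rw [hPoly]
      simp only [add_comp, mul_comp, C_comp, X_comp, pow_comp, neg_comp, one_comp, ← hh,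
        hpar, hdercomp]
      ring
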